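/- Let a_d, b_d, Δ_d, Δ_{*,d} be sequences of reals with Δ_{*,d} ≥ Δ_d > 0, |b_d| ≤ Δ_{*,d}, and suppose random sequences Â_d, B̂_d satisfy Â_d = Δ_{*,d} + o_p(Δ_d) with Â_d > 0 a.s., and B̂_d = b_d + o_p(Δ_d). Then B̂_d/Â_d = b_d/Δ_{*,d} + o_p(Δ_d/Δ_{*,d}). -/

import Mathlib

/-!
Write `X = (Â - Δ_*)/Δ` and `Y = (B̂ - b)/Δ`, both `o_p(1)`. Since `Δ ≤ Δ_*`, the event `|X| < 1/2`
forces `Â ≥ Δ_*/2`, and on it the exact identity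
`(B̂/Â - b/Δ_*) / (Δ/Δ_*) = (Δ_* Y - b X) / Â` together with `|b| ≤ Δ_*` gives
`|(B̂/Â - b/Δ_*) / (Δ/Δ_*)| ≤ 2 (|X| + |Y|)`. A union bound turns this pointwise estimate
into convergence in probability.
-/

open MeasureTheory ProbabilityTheory Filter Topology

lemma abs_div_sub_div_div_le {A B b Δ Δs : ℝ} (hΔ : 0 < Δ) (hΔs : Δ ≤ Δs) (hb : |b| ≤ Δs)
    (hA : |(A - Δs) / Δ| < 1 / 2) :
    |(B / A - b / Δs) / (Δ / Δs)| ≤ 2 * (|(A - Δs) / Δ| + |(B - b) / Δ|) := by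
  set X := (A - Δs) / Δ
  set Y := (B - b) / Δ
  have hΔs_pos : 0 < Δs := hΔ.trans_le hΔs
  have hA_eq : A = Δs + Δ * X := by simp only [X]; field_simp; ring
  have hA_ge : Δs / 2 ≤ A := by
    have hΔX : |Δ * X| ≤ Δs / 2 := by
      rw [abs_mul, abs_of_pos hΔ]; nlinarith [abs_nonneg X]
    linarith [(abs_le.mp hΔX).1]
  have hA_pos : 0 < A := by linarith
  have hnum : |Y * Δs - b * X| ≤ Δs * (|X| + |Y|) :=
    calc |Y * Δs - b * X| ≤ |Y * Δs| + |b * X| := abs_sub _ _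
      _ = |Y| * Δs + |b| * |X| := by rw [abs_mul, abs_mul, abs_of_pos hΔs_pos]
      _ ≤ Δs * (|X| + |Y|) := by nlinarith [abs_nonneg X]
  calc |(B / A - b / Δs) / (Δ / Δs)| = |Y * Δs - b * X| / A := by
        rw [← abs_of_pos hA_pos, ← abs_div, abs_of_pos hA_pos]
        congr 1; simp only [X, Y]; field_simp; ring
    _ ≤ Δs * (|X| + |Y|) / (Δs / 2) := div_le_div₀ (by positivity) hnum (by positivity) hA_ge
    _ = 2 * (|X| + |Y|) := by field_simp

section InProbability

variable {Ω : ℕ → Type*} [∀ d, MeasureSpace (Ω d)]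

/-- `X d = o_p(1)` as `d → ∞`. -/
def TendstoInProbZero (X : ∀ d, Ω d → ℝ) : Prop :=
  ∀ ε > 0, Tendsto (fun d => (ℙ : Measure (Ω d)).real {ω | ε ≤ |X d ω|}) atTop (𝓝 0)

lemma TendstoInProbZero.of_subset_union [∀ d, IsFiniteMeasure (ℙ : Measure (Ω d))]
    {X Y Z : ∀ d, Ω d → ℝ} (hX : TendstoInProbZero X) (hY : TendstoInProbZero Y)
    (h : ∀ ε > 0, ∃ δ > 0, ∀ d,
      {ω | ε ≤ |Z d ω|} ⊆ {ω | δ ≤ |X d ω|} ∪ {ω | δ ≤ |Y d ω|}) :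
    TendstoInProbZero Z := by
  intro ε hε
  obtain ⟨δ, hδ, hsub⟩ := h ε hε
  have hbound : ∀ d, (ℙ : Measure (Ω d)).real {ω | ε ≤ |Z d ω|} ≤
      (ℙ : Measure (Ω d)).real {ω | δ ≤ |X d ω|} + (ℙ : Measure (Ω d)).real {ω | δ ≤ |Y d ω|} := fun d =>
    (measureReal_mono (hsub d)).trans (measureReal_union_le _ _)
  exact squeeze_zero (fun _ => measureReal_nonneg) hbound
    (by simpa using (hX δ hδ).add (hY δ hδ))

lemma TendstoInProbZero.of_abs_le_mul_add [∀ d, IsFiniteMeasure (ℙ : Measure (Ω d))]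
    {X Y Z : ∀ d, Ω d → ℝ} (hX : TendstoInProbZero X) (hY : TendstoInProbZero Y)
    {r C : ℝ} (hr : 0 < r) (hC : 0 ≤ C)
    (h : ∀ d ω, |X d ω| < r → |Z d ω| ≤ C * (|X d ω| + |Y d ω|)) :
    TendstoInProbZero Z := by
  refine hX.of_subset_union hY fun ε hε => ?_
  have hε' : 0 < ε / (2 * C + 1) := by positivity
  refine ⟨min r (ε / (2 * C + 1)), lt_min hr hε', fun d ω hω => ?_⟩
  by_contra hnot
  simp only [Set.mem_union, Set.mem_ofPred_eq, not_or, not_le, lt_min_iff] at hω hnot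
  obtain ⟨⟨hXr, hXε⟩, -, hYε⟩ := hnot
  have hsmall : C * (|X d ω| + |Y d ω|) < ε := by
    have hsum : |X d ω| + |Y d ω| < 2 * (ε / (2 * C + 1)) := by linarith
    calc C * (|X d ω| + |Y d ω|) ≤ C * (2 * (ε / (2 * C + 1))) := by gcongr
      _ = ε * (2 * C / (2 * C + 1)) := by ring
      _ < ε * 1 := by gcongr; rw [div_lt_one (by positivity)]; linarith
      _ = ε := mul_one ε
  linarith [h d ω hXr]

end InProbability

theorem stmt_18_general {Ω : ℕ → Type*} [∀ d, MeasureSpace (Ω d)]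
    [∀ d, IsProbabilityMeasure (ℙ : Measure (Ω d))]
    (A B : ∀ d, Ω d → ℝ) (b Δ Δs : ℕ → ℝ)
    (hΔ : ∀ d, 0 < Δ d) (hΔs : ∀ d, Δ d ≤ Δs d) (hb : ∀ d, |b d| ≤ Δs d)
    (hA : ∀ ε > 0, Tendsto
      (fun d => (ℙ {ω | ε ≤ |(A d ω - Δs d) / Δ d|}).toReal) atTop (nhds 0))
    (hB : ∀ ε > 0, Tendsto
      (fun d => (ℙ {ω | ε ≤ |(B d ω - b d) / Δ d|}).toReal) atTop (nhds 0)) :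
    ∀ ε > 0, Tendsto
      (fun d => (ℙ {ω | ε ≤ |(B d ω / A d ω - b d / Δs d) / (Δ d / Δs d)|}).toReal)
      atTop (nhds 0) :=
  TendstoInProbZero.of_abs_le_mul_add (X := fun d ω => (A d ω - Δs d) / Δ d)
    (Y := fun d ω => (B d ω - b d) / Δ d) hA hB one_half_pos zero_le_two
    fun d _ hX => abs_div_sub_div_div_le (hΔ d) (hΔs d) (hb d) hX

theorem stmt_18 {Ω : ℕ → Type*} [∀ d, MeasureSpace (Ω d)]
    [∀ d, IsProbabilityMeasure (ℙ : Measure (Ω d))]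
    (A B : ∀ d, Ω d → ℝ) (b Δ Δs : ℕ → ℝ)
    (hΔ : ∀ d, 0 < Δ d) (hΔs : ∀ d, Δ d ≤ Δs d) (hb : ∀ d, |b d| ≤ Δs d)
    (hApos : ∀ d, ∀ᵐ ω, 0 < A d ω)
    (hA : ∀ ε > 0, Tendsto
      (fun d => (ℙ {ω | ε ≤ |(A d ω - Δs d) / Δ d|}).toReal) atTop (nhds 0))
    (hB : ∀ ε > 0, Tendsto
      (fun d => (ℙ {ω | ε ≤ |(B d ω - b d) / Δ d|}).toReal) atTop (nhds 0)) :
    ∀ ε > 0, Tendsto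
      (fun d => (ℙ {ω | ε ≤ |(B d ω / A d ω - b d / Δs d) / (Δ d / Δs d)|}).toReal)
      atTop (nhds 0) :=
  stmt_18_general A B b Δ Δs hΔ hΔs hb hA hB
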